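/- Observed-data linear system with a post-treatment variable (the equation system underlying Corollary 3): Under Assumptions 5 and 6, for every g ∈ Fin m and all b, d ∈ {0,1}: P(S=b, Y=d | A=1, G=g) = Σ_{a ∈ {0,1}} Σ_{c ∈ {0,1}} P(S=a, Y=c | A=0, G=g) · P(S¹=b, Y¹=d | S⁰=a, Y⁰=c), where all displayed conditional probabilities are well-defined under Assumptions 5 and 6. -/
import Mathlib


open MeasureTheory ProbabilityTheory

namespace Stmt19Aux

variable {Ω : Type*} [MeasurableSpace Ω]

lemma split (μ : Measure Ω) [IsFiniteMeasure μ] (E : Set Ω) (hE : MeasurableSet E)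
    {Q : Ω → Bool} (hQ : Measurable Q) :
    (μ E).toReal
      = (μ (E ∩ {ω | Q ω = true})).toReal + (μ (E ∩ {ω | Q ω = false})).toReal := by
  have hmf : MeasurableSet {ω | Q ω = false} := hQ (measurableSet_singleton false)
  have hdisj : Disjoint (E ∩ {ω | Q ω = true}) (E ∩ {ω | Q ω = false}) := by
    rw [Set.disjoint_left]
    rintro ω ⟨-, h1⟩ ⟨-, h2⟩
    simp only [Set.mem_setOf_eq] at h1 h2
    rw [h1] at h2; exact Bool.noConfusion h2
  have hU : E = (E ∩ {ω | Q ω = true}) ∪ (E ∩ {ω | Q ω = false}) := by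
    ext ω; cases h : Q ω <;> simp [Set.mem_inter_iff, Set.mem_setOf_eq, h]
  conv_lhs => rw [hU]
  rw [measure_union hdisj (hE.inter hmf),
    ENNReal.toReal_add (measure_ne_top _ _) (measure_ne_top _ _)]

lemma split2 (μ : Measure Ω) [IsFiniteMeasure μ] (E : Set Ω) (hE : MeasurableSet E)
    {Q R : Ω → Bool} (hQ : Measurable Q) (hR : Measurable R) :
    (μ E).toReal = ∑ a : Bool, ∑ c : Bool, (μ (E ∩ {ω | Q ω = a ∧ R ω = c})).toReal := by
  have key : ∀ a : Bool, (μ (E ∩ {ω | Q ω = a})).toReal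
      = ∑ c : Bool, (μ (E ∩ {ω | Q ω = a ∧ R ω = c})).toReal := by
    intro a
    have hset : ∀ c : Bool, (E ∩ {ω | Q ω = a}) ∩ {ω | R ω = c}
        = E ∩ {ω | Q ω = a ∧ R ω = c} := by
      intro c; ext ω; simp [Set.mem_inter_iff, Set.mem_setOf_eq, and_assoc]
    rw [split μ (E ∩ {ω | Q ω = a}) (hE.inter (show MeasurableSet {ω | Q ω = a} from hQ (measurableSet_singleton a))) hR, Fintype.sum_bool,
      hset, hset]
  rw [split μ E hE hQ, Fintype.sum_bool, key, key]

end Stmt19Aux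

/-- Conditional probability `P(E | F) = μ(E ∩ F) / μ(F)` as a real number. -/
noncomputable def condP {Ω : Type*} [MeasurableSpace Ω] (μ : Measure Ω) (E F : Set Ω) : ℝ :=
  (μ (E ∩ F)).toReal / (μ F).toReal

/-- **Observed-data linear system with a post-treatment variable** (the equation system
underlying Corollary 3). Under Assumptions 5 and 6, for every `g` and all `b, d`:
`P(S=b, Y=d | A=1, G=g) = Σ_{a,c} P(S=a, Y=c | A=0, G=g) · P(S¹=b, Y¹=d | S⁰=a, Y⁰=c)`. -/
theorem stmt19
    {Ω : Type*} [MeasurableSpace Ω] (μ : Measure Ω) [IsProbabilityMeasure μ]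
    {m : ℕ} (hm : 1 ≤ m)
    (G : Ω → Fin m) (A S0 S1 Y0 Y1 S Y : Ω → Bool)
    (hGmeas : Measurable G) (hAmeas : Measurable A)
    (hS0meas : Measurable S0) (hS1meas : Measurable S1)
    (hY0meas : Measurable Y0) (hY1meas : Measurable Y1)
    (hSdef : ∀ ω, S ω = bif A ω then S1 ω else S0 ω)
    (hYdef : ∀ ω, Y ω = bif A ω then Y1 ω else Y0 ω)
    -- Assumption 5
    (hA5pos : ∀ g : Fin m, 0 < μ {ω | G ω = g})
    (hA5ov : ∀ g : Fin m, 0 < condP μ {ω | A ω = true} {ω | G ω = g} ∧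
        condP μ {ω | A ω = true} {ω | G ω = g} < 1)
    (hA5ind : ∀ (g : Fin m) (a s0 s1 y0 y1 : Bool),
      condP μ {ω | A ω = a ∧ S0 ω = s0 ∧ S1 ω = s1 ∧ Y0 ω = y0 ∧ Y1 ω = y1} {ω | G ω = g} =
        condP μ {ω | A ω = a} {ω | G ω = g} *
          condP μ {ω | S0 ω = s0 ∧ S1 ω = s1 ∧ Y0 ω = y0 ∧ Y1 ω = y1} {ω | G ω = g})
    -- Assumption 6
    (hA6pos : ∀ a c : Bool, 0 < μ {ω | S0 ω = a ∧ Y0 ω = c})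
    (hA6 : ∀ (a b c d : Bool) (g : Fin m), 0 < μ {ω | S0 ω = a ∧ Y0 ω = c ∧ G ω = g} →
      condP μ {ω | S1 ω = b ∧ Y1 ω = d} {ω | S0 ω = a ∧ Y0 ω = c ∧ G ω = g} =
        condP μ {ω | S1 ω = b ∧ Y1 ω = d} {ω | S0 ω = a ∧ Y0 ω = c}) :
    ∀ (g : Fin m) (b d : Bool),
      condP μ {ω | S ω = b ∧ Y ω = d} {ω | A ω = true ∧ G ω = g} =
        ∑ a : Bool, ∑ c : Bool,
          condP μ {ω | S ω = a ∧ Y ω = c} {ω | A ω = false ∧ G ω = g} *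
            condP μ {ω | S1 ω = b ∧ Y1 ω = d} {ω | S0 ω = a ∧ Y0 ω = c} := by
  intro g b d
  -- measurability
  have mA1 : MeasurableSet {ω | A ω = true} := hAmeas (measurableSet_singleton true)
  have mA0 : MeasurableSet {ω | A ω = false} := hAmeas (measurableSet_singleton false)
  have mG : MeasurableSet {ω | G ω = g} := hGmeas (measurableSet_singleton g)
  have mT : MeasurableSet {ω | S1 ω = b ∧ Y1 ω = d} :=
    (hS1meas (measurableSet_singleton b)).inter (hY1meas (measurableSet_singleton d))
  have mSY0 : ∀ a c : Bool, MeasurableSet {ω | S0 ω = a ∧ Y0 ω = c} := fun a c =>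
    (hS0meas (measurableSet_singleton a)).inter (hY0meas (measurableSet_singleton c))
  -- positivity
  have hpg : 0 < (μ {ω | G ω = g}).toReal :=
    ENNReal.toReal_pos (hA5pos g).ne' (measure_ne_top μ _)
  have hpgne : (μ {ω | G ω = g}).toReal ≠ 0 := hpg.ne'
  have hA1c := (hA5ov g).1
  rw [condP] at hA1c
  have hpA1 : 0 < (μ ({ω | A ω = true} ∩ {ω | G ω = g})).toReal := by
    rcases div_pos_iff.mp hA1c with ⟨h, _⟩ | ⟨h, _⟩
    · exact h
    · exact absurd h (not_lt.mpr ENNReal.toReal_nonneg)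
  have hA1lt := (hA5ov g).2
  rw [condP] at hA1lt
  have hA1lt' : (μ ({ω | A ω = true} ∩ {ω | G ω = g})).toReal < (μ {ω | G ω = g}).toReal :=
    (div_lt_one hpg).mp hA1lt
  have hGsplit := Stmt19Aux.split μ {ω | G ω = g} mG hAmeas
  have hpA0 : 0 < (μ ({ω | A ω = false} ∩ {ω | G ω = g})).toReal := by
    rw [Set.inter_comm]
    have h1 : {ω | G ω = g} ∩ {ω | A ω = true} = {ω | A ω = true} ∩ {ω | G ω = g} :=
      Set.inter_comm _ _
    rw [h1] at hGsplit
    linarith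
  -- A5 product form, A = true
  have hstep1 : ∀ a c : Bool,
      (μ ({ω | A ω = true ∧ S0 ω = a ∧ S1 ω = b ∧ Y0 ω = c ∧ Y1 ω = d} ∩ {ω | G ω = g})).toReal
          * (μ {ω | G ω = g}).toReal
        = (μ ({ω | A ω = true} ∩ {ω | G ω = g})).toReal
          * (μ ({ω | S0 ω = a ∧ S1 ω = b ∧ Y0 ω = c ∧ Y1 ω = d} ∩ {ω | G ω = g})).toReal := by
    intro a c
    have h := hA5ind g true a b c d
    rw [condP, condP, condP, div_mul_div_comm,
      div_eq_div_iff hpgne (mul_ne_zero hpgne hpgne)] at h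
    apply mul_right_cancel₀ hpgne
    ring_nf
    ring_nf at h
    linarith
  -- marginalized A5, A = true
  have hnum1 : (μ (({ω | A ω = true} ∩ {ω | S1 ω = b ∧ Y1 ω = d}) ∩ {ω | G ω = g})).toReal
      * (μ {ω | G ω = g}).toReal
      = (μ ({ω | A ω = true} ∩ {ω | G ω = g})).toReal
        * (μ ({ω | S1 ω = b ∧ Y1 ω = d} ∩ {ω | G ω = g})).toReal := by
    have e1 := Stmt19Aux.split2 μ (({ω | A ω = true} ∩ {ω | S1 ω = b ∧ Y1 ω = d}) ∩ {ω | G ω = g})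
        ((mA1.inter mT).inter mG) hS0meas hY0meas
    have e2 := Stmt19Aux.split2 μ ({ω | S1 ω = b ∧ Y1 ω = d} ∩ {ω | G ω = g})
        (mT.inter mG) hS0meas hY0meas
    have e1' : ∀ a c : Bool, (({ω | A ω = true} ∩ {ω | S1 ω = b ∧ Y1 ω = d}) ∩ {ω | G ω = g})
          ∩ {ω | S0 ω = a ∧ Y0 ω = c}
        = {ω | A ω = true ∧ S0 ω = a ∧ S1 ω = b ∧ Y0 ω = c ∧ Y1 ω = d} ∩ {ω | G ω = g} := by
      intro a c; ext ω; simp only [Set.mem_inter_iff, Set.mem_setOf_eq]; tauto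
    have e2' : ∀ a c : Bool, ({ω | S1 ω = b ∧ Y1 ω = d} ∩ {ω | G ω = g})
          ∩ {ω | S0 ω = a ∧ Y0 ω = c}
        = {ω | S0 ω = a ∧ S1 ω = b ∧ Y0 ω = c ∧ Y1 ω = d} ∩ {ω | G ω = g} := by
      intro a c; ext ω; simp only [Set.mem_inter_iff, Set.mem_setOf_eq]; tauto
    simp only [e1'] at e1
    simp only [e2'] at e2
    rw [e1, e2, Finset.sum_mul, Finset.mul_sum]
    refine Finset.sum_congr rfl fun a _ => ?_
    rw [Finset.sum_mul, Finset.mul_sum]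
    exact Finset.sum_congr rfl fun c _ => hstep1 a c
  -- marginalized A5, A = false
  have hnum0 : ∀ a c : Bool,
      (μ (({ω | A ω = false} ∩ {ω | S0 ω = a ∧ Y0 ω = c}) ∩ {ω | G ω = g})).toReal
          * (μ {ω | G ω = g}).toReal
        = (μ ({ω | A ω = false} ∩ {ω | G ω = g})).toReal
          * (μ ({ω | S0 ω = a ∧ Y0 ω = c} ∩ {ω | G ω = g})).toReal := by
    intro a c
    have hstep0 : ∀ s1 y1 : Bool,
        (μ ({ω | A ω = false ∧ S0 ω = a ∧ S1 ω = s1 ∧ Y0 ω = c ∧ Y1 ω = y1} ∩ {ω | G ω = g})).toReal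
            * (μ {ω | G ω = g}).toReal
          = (μ ({ω | A ω = false} ∩ {ω | G ω = g})).toReal
            * (μ ({ω | S0 ω = a ∧ S1 ω = s1 ∧ Y0 ω = c ∧ Y1 ω = y1} ∩ {ω | G ω = g})).toReal := by
      intro s1 y1
      have h := hA5ind g false a s1 c y1
      rw [condP, condP, condP, div_mul_div_comm,
        div_eq_div_iff hpgne (mul_ne_zero hpgne hpgne)] at h
      apply mul_right_cancel₀ hpgne
      ring_nf
      ring_nf at h
      linarith
    have e1 := Stmt19Aux.split2 μ (({ω | A ω = false} ∩ {ω | S0 ω = a ∧ Y0 ω = c}) ∩ {ω | G ω = g})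
        ((mA0.inter (mSY0 a c)).inter mG) hS1meas hY1meas
    have e2 := Stmt19Aux.split2 μ ({ω | S0 ω = a ∧ Y0 ω = c} ∩ {ω | G ω = g})
        ((mSY0 a c).inter mG) hS1meas hY1meas
    have e1' : ∀ s1 y1 : Bool, (({ω | A ω = false} ∩ {ω | S0 ω = a ∧ Y0 ω = c}) ∩ {ω | G ω = g})
          ∩ {ω | S1 ω = s1 ∧ Y1 ω = y1}
        = {ω | A ω = false ∧ S0 ω = a ∧ S1 ω = s1 ∧ Y0 ω = c ∧ Y1 ω = y1} ∩ {ω | G ω = g} := by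
      intro s1 y1; ext ω; simp only [Set.mem_inter_iff, Set.mem_setOf_eq]; tauto
    have e2' : ∀ s1 y1 : Bool, ({ω | S0 ω = a ∧ Y0 ω = c} ∩ {ω | G ω = g})
          ∩ {ω | S1 ω = s1 ∧ Y1 ω = y1}
        = {ω | S0 ω = a ∧ S1 ω = s1 ∧ Y0 ω = c ∧ Y1 ω = y1} ∩ {ω | G ω = g} := by
      intro s1 y1; ext ω; simp only [Set.mem_inter_iff, Set.mem_setOf_eq]; tauto
    simp only [e1'] at e1
    simp only [e2'] at e2
    rw [e1, e2, Finset.sum_mul, Finset.mul_sum]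
    refine Finset.sum_congr rfl fun s1 _ => ?_
    rw [Finset.sum_mul, Finset.mul_sum]
    exact Finset.sum_congr rfl fun y1 _ => hstep0 s1 y1
  -- chain rule + A6
  have hchain : ∀ a c : Bool,
      (μ (({ω | S0 ω = a ∧ Y0 ω = c} ∩ {ω | S1 ω = b ∧ Y1 ω = d}) ∩ {ω | G ω = g})).toReal
        = (μ ({ω | S0 ω = a ∧ Y0 ω = c} ∩ {ω | G ω = g})).toReal
          * condP μ {ω | S1 ω = b ∧ Y1 ω = d} {ω | S0 ω = a ∧ Y0 ω = c} := by
    intro a c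
    have hsetg : {ω | S0 ω = a ∧ Y0 ω = c ∧ G ω = g}
        = {ω | S0 ω = a ∧ Y0 ω = c} ∩ {ω | G ω = g} := by
      ext ω; simp only [Set.mem_inter_iff, Set.mem_setOf_eq]; tauto
    by_cases h0 : μ ({ω | S0 ω = a ∧ Y0 ω = c} ∩ {ω | G ω = g}) = 0
    · have hle : μ (({ω | S0 ω = a ∧ Y0 ω = c} ∩ {ω | S1 ω = b ∧ Y1 ω = d}) ∩ {ω | G ω = g}) = 0 := by
        refine measure_mono_null ?_ h0
        rintro ω ⟨⟨h1, _⟩, h3⟩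
        exact ⟨h1, h3⟩
      rw [hle, h0]; simp
    · have hpos : 0 < μ {ω | S0 ω = a ∧ Y0 ω = c ∧ G ω = g} := by
        rw [hsetg]; exact pos_iff_ne_zero.mpr h0
      have h6 := hA6 a b c d g hpos
      rw [condP, hsetg] at h6
      have hset2 : {ω | S1 ω = b ∧ Y1 ω = d} ∩ ({ω | S0 ω = a ∧ Y0 ω = c} ∩ {ω | G ω = g})
          = ({ω | S0 ω = a ∧ Y0 ω = c} ∩ {ω | S1 ω = b ∧ Y1 ω = d}) ∩ {ω | G ω = g} := by
        ext ω; simp only [Set.mem_inter_iff, Set.mem_setOf_eq]; tauto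
      rw [hset2] at h6
      have hne : (μ ({ω | S0 ω = a ∧ Y0 ω = c} ∩ {ω | G ω = g})).toReal ≠ 0 :=
        (ENNReal.toReal_pos h0 (measure_ne_top μ _)).ne'
      rw [div_eq_iff hne] at h6
      rw [h6]; ring
  -- law of total probability
  have htot : (μ ({ω | S1 ω = b ∧ Y1 ω = d} ∩ {ω | G ω = g})).toReal
      = ∑ a : Bool, ∑ c : Bool,
        (μ (({ω | S0 ω = a ∧ Y0 ω = c} ∩ {ω | S1 ω = b ∧ Y1 ω = d}) ∩ {ω | G ω = g})).toReal := by
    have e := Stmt19Aux.split2 μ ({ω | S1 ω = b ∧ Y1 ω = d} ∩ {ω | G ω = g})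
        (mT.inter mG) hS0meas hY0meas
    have e' : ∀ a c : Bool, ({ω | S1 ω = b ∧ Y1 ω = d} ∩ {ω | G ω = g})
          ∩ {ω | S0 ω = a ∧ Y0 ω = c}
        = ({ω | S0 ω = a ∧ Y0 ω = c} ∩ {ω | S1 ω = b ∧ Y1 ω = d}) ∩ {ω | G ω = g} := by
      intro a c; ext ω; simp only [Set.mem_inter_iff, Set.mem_setOf_eq]; tauto
    simp only [e'] at e
    exact e
  -- rewrite observed quantities
  have hobs1 : {ω | S ω = b ∧ Y ω = d} ∩ {ω | A ω = true ∧ G ω = g}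
      = ({ω | A ω = true} ∩ {ω | S1 ω = b ∧ Y1 ω = d}) ∩ {ω | G ω = g} := by
    ext ω
    simp only [Set.mem_inter_iff, Set.mem_setOf_eq, hSdef, hYdef]
    cases h : A ω <;> simp [h] <;> tauto
  have hobs0 : ∀ a c : Bool, {ω | S ω = a ∧ Y ω = c} ∩ {ω | A ω = false ∧ G ω = g}
      = ({ω | A ω = false} ∩ {ω | S0 ω = a ∧ Y0 ω = c}) ∩ {ω | G ω = g} := by
    intro a c
    ext ω
    simp only [Set.mem_inter_iff, Set.mem_setOf_eq, hSdef, hYdef]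
    cases h : A ω <;> simp [h] <;> tauto
  have hden1 : {ω | A ω = true ∧ G ω = g} = {ω | A ω = true} ∩ {ω | G ω = g} := rfl
  have hden0 : {ω | A ω = false ∧ G ω = g} = {ω | A ω = false} ∩ {ω | G ω = g} := rfl
  have hL : condP μ {ω | S ω = b ∧ Y ω = d} {ω | A ω = true ∧ G ω = g}
      = (μ ({ω | S1 ω = b ∧ Y1 ω = d} ∩ {ω | G ω = g})).toReal / (μ {ω | G ω = g}).toReal := by
    rw [condP, hobs1, hden1, div_eq_div_iff hpA1.ne' hpgne]
    linarith [hnum1]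
  have hR : ∀ a c : Bool, condP μ {ω | S ω = a ∧ Y ω = c} {ω | A ω = false ∧ G ω = g}
      = (μ ({ω | S0 ω = a ∧ Y0 ω = c} ∩ {ω | G ω = g})).toReal / (μ {ω | G ω = g}).toReal := by
    intro a c
    rw [condP, hobs0 a c, hden0, div_eq_div_iff hpA0.ne' hpgne]
    linarith [hnum0 a c]
  rw [hL]
  simp only [hR]
  have hterm : ∀ a c : Bool,
      (μ ({ω | S0 ω = a ∧ Y0 ω = c} ∩ {ω | G ω = g})).toReal / (μ {ω | G ω = g}).toReal
          * condP μ {ω | S1 ω = b ∧ Y1 ω = d} {ω | S0 ω = a ∧ Y0 ω = c}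
        = (μ (({ω | S0 ω = a ∧ Y0 ω = c} ∩ {ω | S1 ω = b ∧ Y1 ω = d}) ∩ {ω | G ω = g})).toReal
          / (μ {ω | G ω = g}).toReal := by
    intro a c; rw [hchain a c]; ring
  simp only [hterm]
  rw [htot]
  simp [Finset.sum_div]
  ring
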